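/- Let 𝒜 be a prime unital ∗-algebra over ℂ containing a nontrivial projection P₁, and let Φ : 𝒜 → 𝒜 be a nonlinear ⋄-derivation such that Φ(I/2) and Φ(iI/2) are self-adjoint. Then Φ is additive: Φ(A + B) = Φ(A) + Φ(B) for all A, B ∈ 𝒜. -/

import Mathlib

/-!
Write `a ⋄ b = a* b - b* a` and `D(a, b) = Φ (a + b) - Φ a - Φ b`. The derivation rule gives
`c ⋄ D(a, b) = D(c ⋄ a, c ⋄ b)`; since `c ⋄ m = 0 = (i c) ⋄ m` forces `c m = 0` for self-adjoint
`c`, a self-adjoint `c` with `c a = 0` also annihilates `D(a, b)`.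

Testing the rule against the skew element `i·1` shows that `Φ (1/2)` and `Φ (i/2)` vanish. Hence
`Φ` preserves skew elements and `Φ T = Φ (½ ⋄ T) + i Φ ((i/2) ⋄ T)`, where both arguments are skew
and additive in `T`; so it suffices to prove additivity on skew elements.

There we use the Peirce decomposition along `P` and `Q = 1 - P`. Additivity at `a + b` with
`Q a = 0 = P b` is immediate from the first paragraph, and pushing it through `(P + v*) ⋄ ·` gives
additivity on off-diagonal skew elements `u - u*`. If `s, t` are skew and `Q s = 0`, the defect
`M = D(s, t)` lies in `P 𝒜 P` and `P ((P z Q) ⋄ M) Q = M z Q` is the defect of two off-diagonal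
skew elements, hence zero; primeness gives `M = 0`. Splitting skew elements into their three
Peirce parts finishes the proof.
-/

section

variable {𝒜 : Type*}

section AddCommGroup
variable [AddCommGroup 𝒜]

def addDefect (Φ : 𝒜 → 𝒜) (a b : 𝒜) : 𝒜 := Φ (a + b) - Φ a - Φ b

theorem addDefect_eq_zero_iff {Φ : 𝒜 → 𝒜} {a b : 𝒜} :
    addDefect Φ a b = 0 ↔ Φ (a + b) = Φ a + Φ b := by
  rw [addDefect, sub_sub, sub_eq_zero]

theorem addDefect_comm (Φ : 𝒜 → 𝒜) (a b : 𝒜) : addDefect Φ a b = addDefect Φ b a := by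
  rw [addDefect, addDefect, add_comm a]; abel

end AddCommGroup

def diamond [Star 𝒜] [Mul 𝒜] [Sub 𝒜] (a b : 𝒜) : 𝒜 := star a * b - star b * a

local infixl:67 " ⋄ " => diamond

section StarRing
variable [Ring 𝒜] [StarRing 𝒜]

theorem diamond_add_right (c a b : 𝒜) : c ⋄ (a + b) = c ⋄ a + c ⋄ b := by
  simp only [diamond, star_add, mul_add, add_mul]; abel

theorem diamond_sub_right (c a b : 𝒜) : c ⋄ (a - b) = c ⋄ a - c ⋄ b := by
  simp only [diamond, star_sub, mul_sub, sub_mul]; abel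

theorem zero_diamond (a : 𝒜) : 0 ⋄ a = 0 := by simp [diamond]

theorem diamond_zero (a : 𝒜) : a ⋄ 0 = 0 := by simp [diamond]

theorem star_diamond (a b : 𝒜) : star (a ⋄ b) = -(a ⋄ b) := by
  simp [diamond]

theorem diamond_eq_zero_of_star_mul_eq_zero {c a : 𝒜} (h : star c * a = 0) : c ⋄ a = 0 := by
  rw [diamond, ← star_star c, ← star_mul, star_star, h, star_zero, sub_zero]

theorem diamond_of_star_eq_neg {a : 𝒜} (ha : star a = -a) (c : 𝒜) :
    c ⋄ a = a * c - star (a * c) := by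
  rw [diamond, star_mul, ha]; noncomm_ring

theorem star_sub_star_self (u : 𝒜) : star (u - star u) = -(u - star u) := by
  rw [star_sub, star_star, neg_sub]

theorem star_mul_mul_of_star_eq_neg {c S : 𝒜} (hc : IsSelfAdjoint c) (hS : star S = -S) :
    star (c * S * c) = -(c * S * c) := by
  rw [star_mul, star_mul, hc.star_eq, hS, neg_mul, mul_neg, mul_assoc]

theorem mul_eq_zero_of_mul_eq_zero_of_star_eq_neg {c m : 𝒜} (hc : IsSelfAdjoint c)
    (hm : star m = -m) (h : c * m = 0) : m * c = 0 := by
  simpa [hc.star_eq, hm] using congrArg star h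

end StarRing

section ComplexAlgebra
variable [Ring 𝒜] [StarRing 𝒜] [Algebra ℂ 𝒜] [StarModule ℂ 𝒜]

theorem I_smul_diamond (c a : 𝒜) :
    (Complex.I • c) ⋄ a = -Complex.I • (star c * a + star a * c) := by
  simp only [diamond, star_smul, Complex.star_def, Complex.conj_I, smul_mul_assoc,
    mul_smul_comm]
  module

theorem mul_eq_zero_of_diamond_eq_zero {c m : 𝒜} (hc : IsSelfAdjoint c) (h : c ⋄ m = 0)
    (hI : (Complex.I • c) ⋄ m = 0) : c * m = 0 := by
  rw [I_smul_diamond, smul_eq_zero, hc.star_eq] at hI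
  rw [diamond, hc.star_eq] at h
  have h2 : (2 : ℂ) • (c * m) = 0 := by
    linear_combination (norm := module) h + hI.resolve_left (by simp)
  simpa using h2

theorem half_smul_one_diamond (a : 𝒜) :
    (((1 : ℂ) / 2) • (1 : 𝒜)) ⋄ a = ((1 : ℂ) / 2) • (a - star a) := by
  simp only [diamond, star_smul, star_one, Complex.star_def, map_div₀, map_one, map_ofNat,
    smul_mul_assoc, mul_smul_comm, one_mul, mul_one, smul_sub]

theorem I_half_smul_one_diamond (a : 𝒜) :
    ((Complex.I / 2) • (1 : 𝒜)) ⋄ a = -(Complex.I / 2) • (a + star a) := by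
  simp only [diamond, star_smul, star_one, Complex.star_def, map_div₀, Complex.conj_I,
    map_ofNat, smul_mul_assoc, mul_smul_comm, one_mul, mul_one]
  module

theorem half_smul_one_diamond_of_star_eq_neg {a : 𝒜} (ha : star a = -a) :
    (((1 : ℂ) / 2) • (1 : 𝒜)) ⋄ a = a := by
  rw [half_smul_one_diamond, ha]; module

theorem I_half_smul_one_diamond_of_star_eq_neg {a : 𝒜} (ha : star a = -a) :
    ((Complex.I / 2) • (1 : 𝒜)) ⋄ a = 0 := by
  rw [I_half_smul_one_diamond, ha, add_neg_cancel, smul_zero]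

theorem diamond_I_smul_one (c : 𝒜) :
    c ⋄ (Complex.I • 1) = Complex.I • (star c + c) := by
  simp only [diamond, star_smul, star_one, Complex.star_def, Complex.conj_I, smul_mul_assoc,
    mul_smul_comm, one_mul, mul_one]
  module

end ComplexAlgebra

section Derivation
variable [Ring 𝒜] [StarRing 𝒜]

def IsDiamondDerivation (Φ : 𝒜 → 𝒜) : Prop :=
  ∀ a b, Φ (a ⋄ b) = Φ a ⋄ b + a ⋄ Φ b

theorem star_addDefect {Φ : 𝒜 → 𝒜} (hsk : ∀ S : 𝒜, star S = -S → star (Φ S) = -Φ S)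
    {a b : 𝒜} (ha : star a = -a) (hb : star b = -b) :
    star (addDefect Φ a b) = -addDefect Φ a b := by
  have hab : star (a + b) = -(a + b) := by rw [star_add, ha, hb, neg_add]
  rw [addDefect, star_sub, star_sub, hsk _ hab, hsk _ ha, hsk _ hb]; abel

namespace IsDiamondDerivation
variable {Φ : 𝒜 → 𝒜} (hΦ : IsDiamondDerivation Φ)
include hΦ

theorem map_zero : Φ 0 = 0 := by
  simpa [diamond] using hΦ 0 0

theorem addDefect_zero_left (b : 𝒜) : addDefect Φ 0 b = 0 := by
  rw [addDefect, zero_add, hΦ.map_zero]; abel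

theorem diamond_addDefect (c a b : 𝒜) :
    c ⋄ addDefect Φ a b = addDefect Φ (c ⋄ a) (c ⋄ b) := by
  rw [addDefect, addDefect, ← diamond_add_right, hΦ, hΦ, hΦ, diamond_add_right,
    diamond_sub_right, diamond_sub_right]
  abel

theorem map_diamond_add {a b : 𝒜} (h : Φ (a + b) = Φ a + Φ b) (c : 𝒜) :
    Φ (c ⋄ a + c ⋄ b) = Φ (c ⋄ a) + Φ (c ⋄ b) := by
  rw [← addDefect_eq_zero_iff, ← hΦ.diamond_addDefect, addDefect_eq_zero_iff.2 h,
    diamond_zero]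

theorem map_diamond_of_map_eq_zero {c : 𝒜} (hc : Φ c = 0) (a : 𝒜) : Φ (c ⋄ a) = c ⋄ Φ a := by
  rw [hΦ, hc, zero_diamond, zero_add]

end IsDiamondDerivation

end Derivation

namespace IsDiamondDerivation
variable [Ring 𝒜] [StarRing 𝒜] [Algebra ℂ 𝒜] [StarModule ℂ 𝒜]
  {Φ : 𝒜 → 𝒜} (hΦ : IsDiamondDerivation Φ)
include hΦ

theorem mul_addDefect_eq_zero {c a : 𝒜} (hc : IsSelfAdjoint c) (h : c * a = 0) (b : 𝒜) :
    c * addDefect Φ a b = 0 := by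
  have hca : star c * a = 0 := by rw [hc.star_eq, h]
  have hIca : star (Complex.I • c) * a = 0 := by rw [star_smul, smul_mul_assoc, hca, smul_zero]
  apply mul_eq_zero_of_diamond_eq_zero hc <;>
  rw [hΦ.diamond_addDefect, diamond_eq_zero_of_star_mul_eq_zero ‹_›, hΦ.addDefect_zero_left]

theorem mul_addDefect_eq_zero_of_right {c b : 𝒜} (hc : IsSelfAdjoint c) (h : c * b = 0) (a : 𝒜) :
    c * addDefect Φ a b = 0 := by
  rw [addDefect_comm]; exact hΦ.mul_addDefect_eq_zero hc h a

section SelfAdjointHalves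
variable (h1 : star (Φ (((1 : ℂ) / 2) • (1 : 𝒜))) = Φ (((1 : ℂ) / 2) • (1 : 𝒜)))
  (h2 : star (Φ ((Complex.I / 2) • (1 : 𝒜))) = Φ ((Complex.I / 2) • (1 : 𝒜)))
include h1 h2

theorem map_half_smul_one_eq_zero :
    Φ (((1 : ℂ) / 2) • (1 : 𝒜)) = 0 ∧ Φ ((Complex.I / 2) • (1 : 𝒜)) = 0 := by
  have hS : star (Complex.I • (1 : 𝒜)) = -(Complex.I • 1) := by simp [star_smul]
  have e1 := hΦ (((1 : ℂ) / 2) • (1 : 𝒜)) (Complex.I • 1)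
  have e2 := hΦ ((Complex.I / 2) • (1 : 𝒜)) (Complex.I • 1)
  rw [half_smul_one_diamond_of_star_eq_neg hS, diamond_I_smul_one, h1,
    half_smul_one_diamond] at e1
  rw [I_half_smul_one_diamond_of_star_eq_neg hS, hΦ.map_zero, diamond_I_smul_one, h2,
    I_half_smul_one_diamond] at e2
  set H := Φ (((1 : ℂ) / 2) • (1 : 𝒜))
  set K := Φ ((Complex.I / 2) • (1 : 𝒜))
  have hK : K = Complex.I • H := by
    linear_combination (norm := match_scalars <;> ring_nf <;> norm_num [Complex.I_sq])
      ((1 : ℂ) / 2) • e1 + (Complex.I / 2) • e2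
  have hH : (2 * Complex.I) • H = 0 := by
    have hKs := h2
    rw [hK, star_smul, h1, Complex.star_def, Complex.conj_I] at hKs
    linear_combination (norm := module) -hKs
  have hH0 : H = 0 := (smul_eq_zero.1 hH).resolve_left (by simp)
  exact ⟨hH0, by rw [hK, hH0, smul_zero]⟩

theorem star_map_of_star_eq_neg {S : 𝒜} (hS : star S = -S) : star (Φ S) = -Φ S := by
  have h := hΦ.map_diamond_of_map_eq_zero (hΦ.map_half_smul_one_eq_zero h1 h2).1 S
  rw [half_smul_one_diamond_of_star_eq_neg hS, half_smul_one_diamond] at h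
  linear_combination (norm := module) (2 : ℂ) • h

theorem map_eq_add_I_smul (T : 𝒜) :
    Φ T = Φ ((((1 : ℂ) / 2) • (1 : 𝒜)) ⋄ T)
      + Complex.I • Φ (((Complex.I / 2) • (1 : 𝒜)) ⋄ T) := by
  obtain ⟨hH, hK⟩ := hΦ.map_half_smul_one_eq_zero h1 h2
  rw [hΦ.map_diamond_of_map_eq_zero hH, hΦ.map_diamond_of_map_eq_zero hK,
    half_smul_one_diamond, I_half_smul_one_diamond]
  match_scalars <;> ring_nf <;> norm_num [Complex.I_sq]

theorem map_add_of_map_add_skew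
    (hadd : ∀ S T : 𝒜, star S = -S → star T = -T → Φ (S + T) = Φ S + Φ T) (A B : 𝒜) :
    Φ (A + B) = Φ A + Φ B := by
  rw [hΦ.map_eq_add_I_smul h1 h2 (A + B), diamond_add_right, diamond_add_right,
    hadd _ _ (star_diamond _ _) (star_diamond _ _), hadd _ _ (star_diamond _ _) (star_diamond _ _),
    hΦ.map_eq_add_I_smul h1 h2 A, hΦ.map_eq_add_I_smul h1 h2 B, smul_add]
  abel

end SelfAdjointHalves
end IsDiamondDerivation

namespace IsStarProjection
variable [Ring 𝒜] [StarRing 𝒜] {P Q : 𝒜}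

theorem of_add_eq_one (hP : IsStarProjection P) (hPQ : P + Q = 1) : IsStarProjection Q := by
  rw [eq_sub_of_add_eq' hPQ]; exact hP.one_sub

theorem mul_eq_zero_of_add_eq_one (hP : IsStarProjection P) (hPQ : P + Q = 1) : P * Q = 0 := by
  rw [eq_sub_of_add_eq' hPQ]; exact hP.mul_one_sub_self

end IsStarProjection

theorem mul_eq_self_of_add_eq_one [Ring 𝒜] {P Q a : 𝒜} (hPQ : P + Q = 1) (ha : Q * a = 0) :
    P * a = a := by
  rw [eq_sub_of_add_eq hPQ, sub_mul, one_mul, ha, sub_zero]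

theorem mul_eq_self_of_add_eq_one_right [Ring 𝒜] {P Q a : 𝒜} (hPQ : P + Q = 1) (ha : a * Q = 0) :
    a * P = a := by
  rw [eq_sub_of_add_eq hPQ, mul_sub, mul_one, ha, sub_zero]

section PrimeRing
variable [Ring 𝒜] [StarRing 𝒜]

theorem eq_zero_of_forall_mul_diamond_mul_eq_zero
    (hprime : ∀ a b : 𝒜, (∀ x : 𝒜, a * x * b = 0) → a = 0 ∨ b = 0)
    {P Q M : 𝒜} (hP : IsStarProjection P) (hPQ : P + Q = 1) (hQ0 : Q ≠ 0)
    (hQM : Q * M = 0) (hMQ : M * Q = 0) (h : ∀ z, P * ((P * z * Q) ⋄ M) * Q = 0) : M = 0 := by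
  have hQ := hP.of_add_eq_one hPQ
  have hPs : star P = P := hP.isSelfAdjoint.star_eq
  have hQs : star Q = Q := hQ.isSelfAdjoint.star_eq
  have hMsP : star M * P = star M :=
    mul_eq_self_of_add_eq_one_right hPQ (by rw [← hQs, ← star_mul, hQM, star_zero])
  have hPMs : P * star M = star M :=
    mul_eq_self_of_add_eq_one hPQ (by rw [← hQs, ← star_mul, hMQ, star_zero])
  have key : ∀ z, star M * z * Q = 0 := fun z => by
    have h' := h z
    rw [diamond, star_mul, star_mul, hPs, hQs, mul_sub, sub_mul] at h'
    simp only [← mul_assoc, hP.mul_eq_zero_of_add_eq_one hPQ, zero_mul, hPMs, hMsP, zero_sub,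
      neg_eq_zero] at h'
    rwa [mul_assoc _ Q Q, hQ.isIdempotentElem.eq] at h'
  simpa [hQ0] using hprime _ _ key

end PrimeRing

namespace IsDiamondDerivation
variable [Ring 𝒜] [StarRing 𝒜] [Algebra ℂ 𝒜] [StarModule ℂ 𝒜]
  {Φ : 𝒜 → 𝒜} (hΦ : IsDiamondDerivation Φ) {P Q : 𝒜} (hP : IsStarProjection P)
  (hPQ : P + Q = 1)
include hΦ hP hPQ

theorem map_add_of_mul_eq_zero {a b : 𝒜} (ha : Q * a = 0) (hb : P * b = 0) :
    Φ (a + b) = Φ a + Φ b := by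
  rw [← addDefect_eq_zero_iff, ← one_mul (addDefect Φ a b), ← hPQ, add_mul,
    hΦ.mul_addDefect_eq_zero_of_right hP.isSelfAdjoint hb,
    hΦ.mul_addDefect_eq_zero (hP.of_add_eq_one hPQ).isSelfAdjoint ha, add_zero]

theorem map_sub_star_add_sub_star {u v : 𝒜} (hu : Q * u = 0) (hv : v * P = 0) :
    Φ (u - star u + (v - star v)) = Φ (u - star u) + Φ (v - star v) := by
  have hQP : Q + P = 1 := (add_comm Q P).trans hPQ
  have hPs : star P = P := hP.isSelfAdjoint.star_eq
  have hQs : star Q = Q := (hP.of_add_eq_one hPQ).isSelfAdjoint.star_eq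
  have hPu : P * u = u := mul_eq_self_of_add_eq_one hPQ hu
  have hvQ : v * Q = v := mul_eq_self_of_add_eq_one_right hQP hv
  have hvu : v * u = 0 := by rw [← hPu, ← mul_assoc, hv, zero_mul]
  have hcu : (P + star v) ⋄ u = u - star u := by
    have hsuP : star u * P = star u := by rw [← hPs, ← star_mul, hPu]
    rw [diamond, star_add, star_star, hPs, add_mul, hPu, hvu, add_zero, mul_add, hsuP,
      ← star_mul, hvu, star_zero, add_zero]
  have hcQ : (P + star v) ⋄ Q = v - star v := by
    have hQsv : Q * star v = star v := by rw [← hQs, ← star_mul, hvQ]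
    rw [diamond, star_add, star_star, hPs, hQs, add_mul, hP.mul_eq_zero_of_add_eq_one hPQ,
      zero_add, hvQ, mul_add, (hP.of_add_eq_one hPQ).mul_eq_zero_of_add_eq_one hQP, zero_add,
      hQsv]
  rw [← hcu, ← hcQ]
  exact hΦ.map_diamond_add (hΦ.map_add_of_mul_eq_zero hP hPQ hu
    (hP.mul_eq_zero_of_add_eq_one hPQ)) _

section Prime
variable (hsk : ∀ S : 𝒜, star S = -S → star (Φ S) = -Φ S)
  (hprime : ∀ a b : 𝒜, (∀ x : 𝒜, a * x * b = 0) → a = 0 ∨ b = 0)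
include hsk hprime

theorem map_add_of_star_eq_neg_of_mul_eq_zero (hQ0 : Q ≠ 0) {s t : 𝒜} (hs : star s = -s)
    (ht : star t = -t) (hQs : Q * s = 0) : Φ (s + t) = Φ s + Φ t := by
  have hQ := hP.of_add_eq_one hPQ
  have hQM := hΦ.mul_addDefect_eq_zero hQ.isSelfAdjoint hQs t
  refine addDefect_eq_zero_iff.1 <| eq_zero_of_forall_mul_diamond_mul_eq_zero hprime hP hPQ
    hQ0 hQM (mul_eq_zero_of_mul_eq_zero_of_star_eq_neg hQ.isSelfAdjoint
      (star_addDefect hsk hs ht) hQM) fun z => ?_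
  have hQP := hQ.mul_eq_zero_of_add_eq_one ((add_comm Q P).trans hPQ)
  rw [hΦ.diamond_addDefect, diamond_of_star_eq_neg hs, diamond_of_star_eq_neg ht,
    addDefect_eq_zero_iff.2 (hΦ.map_sub_star_add_sub_star hP hPQ
      (by rw [← mul_assoc, hQs, zero_mul]) (by simp only [mul_assoc, hQP, mul_zero])),
    mul_zero, zero_mul]

theorem map_eq_add_add_of_star_eq_neg (hP0 : P ≠ 0) (hQ0 : Q ≠ 0) {S : 𝒜}
    (hS : star S = -S) :
    Φ S = Φ (P * S * P) + Φ (Q * S * Q) + Φ (P * S * Q - star (P * S * Q)) := by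
  have hQ := hP.of_add_eq_one hPQ
  have hQP : Q + P = 1 := (add_comm Q P).trans hPQ
  have hdecomp : S = P * S * P + (Q * S * Q + (P * S * Q - star (P * S * Q))) := by
    rw [star_mul, star_mul, hP.isSelfAdjoint.star_eq, hQ.isSelfAdjoint.star_eq, hS]
    conv_lhs => rw [← one_mul S, ← mul_one (1 * S), ← hPQ]
    noncomm_ring
  have hSP := star_mul_mul_of_star_eq_neg hP.isSelfAdjoint hS
  have hSQ := star_mul_mul_of_star_eq_neg hQ.isSelfAdjoint hS
  have hoff := star_sub_star_self (P * S * Q)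
  conv_lhs => rw [hdecomp]
  rw [hΦ.map_add_of_star_eq_neg_of_mul_eq_zero hP hPQ hsk hprime hQ0 hSP
      (by rw [star_add, hSQ, hoff, neg_add])
      (by simp only [← mul_assoc, hQ.mul_eq_zero_of_add_eq_one hQP, zero_mul]),
    hΦ.map_add_of_star_eq_neg_of_mul_eq_zero hQ hQP hsk hprime hP0 hSQ hoff
      (by simp only [← mul_assoc, hP.mul_eq_zero_of_add_eq_one hPQ, zero_mul]), add_assoc]

theorem map_add_of_star_eq_neg (hP0 : P ≠ 0) (hQ0 : Q ≠ 0) {S T : 𝒜} (hS : star S = -S)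
    (hT : star T = -T) : Φ (S + T) = Φ S + Φ T := by
  have hQ := hP.of_add_eq_one hPQ
  have hQP : Q + P = 1 := (add_comm Q P).trans hPQ
  have hPQ0 := hP.mul_eq_zero_of_add_eq_one hPQ
  have hQP0 := hQ.mul_eq_zero_of_add_eq_one hQP
  have hST : star (S + T) = -(S + T) := by rw [star_add, hS, hT, neg_add]
  have hoff : P * (S + T) * Q - star (P * (S + T) * Q)
      = P * S * Q - star (P * S * Q) + (P * T * Q - star (P * T * Q)) := by
    rw [mul_add, add_mul, star_add]; abel
  rw [hΦ.map_eq_add_add_of_star_eq_neg hP hPQ hsk hprime hP0 hQ0 hST,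
    hΦ.map_eq_add_add_of_star_eq_neg hP hPQ hsk hprime hP0 hQ0 hS,
    hΦ.map_eq_add_add_of_star_eq_neg hP hPQ hsk hprime hP0 hQ0 hT, hoff, mul_add, add_mul,
    mul_add, add_mul,
    hΦ.map_add_of_star_eq_neg_of_mul_eq_zero hP hPQ hsk hprime hQ0
      (star_mul_mul_of_star_eq_neg hP.isSelfAdjoint hS)
      (star_mul_mul_of_star_eq_neg hP.isSelfAdjoint hT)
      (by simp only [← mul_assoc, hQP0, zero_mul]),
    hΦ.map_add_of_star_eq_neg_of_mul_eq_zero hQ hQP hsk hprime hP0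
      (star_mul_mul_of_star_eq_neg hQ.isSelfAdjoint hS)
      (star_mul_mul_of_star_eq_neg hQ.isSelfAdjoint hT)
      (by simp only [← mul_assoc, hPQ0, zero_mul]),
    hΦ.map_sub_star_add_sub_star hP hPQ (by simp only [← mul_assoc, hQP0, zero_mul])
      (by simp only [mul_assoc, hQP0, mul_zero])]
  abel

end Prime

end IsDiamondDerivation

end

/-- In a prime unital ∗-algebra over `ℂ` containing a nontrivial
projection `P₁`, a nonlinear `⋄`-derivation `Φ` with `Φ(I/2)`, `Φ(iI/2)` self-adjoint
is additive. -/
theorem stmt11 {𝒜 : Type*} [Ring 𝒜] [Algebra ℂ 𝒜] [StarRing 𝒜] [StarModule ℂ 𝒜]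
    (hprime : ∀ a b : 𝒜, (∀ x : 𝒜, a * x * b = 0) → a = 0 ∨ b = 0)
    (P₁ : 𝒜) (hP₁star : star P₁ = P₁) (hP₁idem : P₁ * P₁ = P₁)
    (hP₁ne0 : P₁ ≠ 0) (hP₁ne1 : P₁ ≠ 1)
    (Φ : 𝒜 → 𝒜)
    (hΦ : ∀ A B : 𝒜, Φ (star A * B - star B * A) =
      (star (Φ A) * B - star B * Φ A) + (star A * Φ B - star (Φ B) * A))
    (h1 : star (Φ (((1 : ℂ)/2) • (1 : 𝒜))) = Φ (((1 : ℂ)/2) • (1 : 𝒜)))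
    (h2 : star (Φ ((Complex.I/2) • (1 : 𝒜))) = Φ ((Complex.I/2) • (1 : 𝒜))) :
    ∀ A B : 𝒜, Φ (A + B) = Φ A + Φ B := by
  have hΦ' : IsDiamondDerivation Φ := hΦ
  have hP : IsStarProjection P₁ := ⟨hP₁idem, hP₁star⟩
  exact hΦ'.map_add_of_map_add_skew h1 h2 fun S T hS hT =>
    hΦ'.map_add_of_star_eq_neg hP (add_sub_cancel P₁ 1)
      (fun _ ↦ hΦ'.star_map_of_star_eq_neg h1 h2) hprime hP₁ne0 (sub_ne_zero.2 hP₁ne1.symm) hS hT
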